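/- arXiv:2211.03398 — 10 statements merged into one kernel-verified Lean document; each statement's English description precedes it below -/
import Mathlib

section
/- Let (T, ≤) be a totally ordered set and t ∈ T. For nonempty subsets S, R of T_{≥t}, define S ⊑ R iff (∀ s ∈ S, ∀ r ∈ R, s < r) or S = R. Let π and ρ be partitions of T_{≥t} into intervals such that both (π, ⊑) and (ρ, ⊑) are well-ordered. Define π ∩ ρ := { S ∩ R : S ∈ π, R ∈ ρ, S ∩ R ≠ ∅ }. Then π ∩ ρ is a partition of T_{≥t} into intervals and (π ∩ ρ, ⊑) is well-ordered. -/
open Set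

/-- `S` is preconnected in the order topology on `α`. -/
def OTconn {α : Type*} [LinearOrder α] (S : Set α) : Prop :=
  @IsPreconnected α (Preorder.topology α) S

/-- Maximal order-connected sets on which `h` is constant. -/
def blocks {α β : Type*} [LinearOrder α] (h : α → β) : Set (Set α) :=
  {S | S.Nonempty ∧ OTconn S ∧
    ∀ R : Set α, OTconn R → S ⊆ R → (R = S ↔ ∃ a, ∀ x ∈ R, h x = a)}

/-- Interval order on sets: `S ⊑ R` iff every element of `S` is strictly below
every element of `R`, or `S = R`. -/
def blw {α : Type*} [LT α] (S R : Set α) : Prop :=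
  (∀ s ∈ S, ∀ r ∈ R, s < r) ∨ S = R

/-- A family of sets is well-ordered by the interval order: it is totally ordered
and every nonempty subfamily has a minimum. -/
def WOFam {α : Type*} [LT α] (π : Set (Set α)) : Prop :=
  (∀ S ∈ π, ∀ R ∈ π, blw S R ∨ blw R S) ∧
  ∀ ρ : Set (Set α), ρ ⊆ π → ρ.Nonempty → ∃ S ∈ ρ, ∀ R ∈ ρ, blw S R

/-- `π` is a partition of `U`: nonempty pairwise-disjoint sets covering `U`. -/
def PartOn {α : Type*} (U : Set α) (π : Set (Set α)) : Prop :=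
  (∀ S ∈ π, S.Nonempty) ∧ ⋃₀ π = U ∧
  ∀ S ∈ π, ∀ R ∈ π, S ≠ R → Disjoint S R

/-- `S` is an interval: closed under betweenness. -/
def IsIntervalIn {α : Type*} [Preorder α] (S : Set α) : Prop :=
  ∀ a ∈ S, ∀ b ∈ S, ∀ x, a ≤ x → x ≤ b → x ∈ S


lemma blw_inter {T : Type*} [LinearOrder T] {S S' R R' : Set T}
    (hS : blw S S') (hR : blw R R') : blw (S ∩ R) (S' ∩ R') := by
  rcases hS with hS | rfl
  · exact Or.inl fun q hq q' hq' => hS q hq.1 q' hq'.1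
  rcases hR with hR | rfl
  · exact Or.inl fun q hq q' hq' => hR q hq.2 q' hq'.2
  · exact Or.inr rfl

theorem stmt3 {T : Type*} [LinearOrder T] (t : T) (π ρ : Set (Set T))
    (hπ1 : PartOn (Set.Ici t) π) (hπ2 : ∀ S ∈ π, IsIntervalIn S) (hπ3 : WOFam π)
    (hρ1 : PartOn (Set.Ici t) ρ) (hρ2 : ∀ S ∈ ρ, IsIntervalIn S) (hρ3 : WOFam ρ)
    (τ : Set (Set T)) (hτ : τ = {Q | ∃ S ∈ π, ∃ R ∈ ρ, Q = S ∩ R ∧ Q.Nonempty}) :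
    PartOn (Set.Ici t) τ ∧ (∀ Q ∈ τ, IsIntervalIn Q) ∧ WOFam τ := by
  subst hτ
  have sameπ : ∀ S ∈ π, ∀ S' ∈ π, ∀ x, x ∈ S → x ∈ S' → S = S' := by
    intro S hS S' hS' x h h'
    by_contra hne
    exact Set.disjoint_left.mp (hπ1.2.2 S hS S' hS' hne) h h'
  have sameρ : ∀ R ∈ ρ, ∀ R' ∈ ρ, ∀ x, x ∈ R → x ∈ R' → R = R' := by
    intro R hR R' hR' x h h'
    by_contra hne
    exact Set.disjoint_left.mp (hρ1.2.2 R hR R' hR' hne) h h'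
  refine ⟨⟨?_, ?_, ?_⟩, ?_, ?_, ?_⟩
  · rintro Q ⟨S, hS, R, hR, rfl, hne⟩
    exact hne
  · apply subset_antisymm
    · rintro x ⟨Q, ⟨S, hS, R, hR, rfl, -⟩, hx⟩
      exact hπ1.2.1 ▸ (⟨S, hS, hx.1⟩ : x ∈ ⋃₀ π)
    · intro x hx
      obtain ⟨S, hS, hxS⟩ : x ∈ ⋃₀ π := hπ1.2.1 ▸ hx
      obtain ⟨R, hR, hxR⟩ : x ∈ ⋃₀ ρ := hρ1.2.1 ▸ hx
      exact ⟨S ∩ R, ⟨S, hS, R, hR, rfl, ⟨x, hxS, hxR⟩⟩, hxS, hxR⟩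
  · rintro Q ⟨S, hS, R, hR, rfl, -⟩ Q' ⟨S', hS', R', hR', rfl, -⟩ hne
    rw [Set.disjoint_left]
    intro x hx hx'
    have e1 : S = S' := sameπ S hS S' hS' x hx.1 hx'.1
    have e2 : R = R' := sameρ R hR R' hR' x hx.2 hx'.2
    exact hne (by rw [e1, e2])
  · rintro Q ⟨S, hS, R, hR, rfl, -⟩ a ha b hb x hax hxb
    exact ⟨hπ2 S hS a ha.1 b hb.1 x hax hxb, hρ2 R hR a ha.2 b hb.2 x hax hxb⟩
  · rintro Q ⟨S, hS, R, hR, rfl, hne⟩ Q' ⟨S', hS', R', hR', rfl, hne'⟩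
    rcases hπ3.1 S hS S' hS' with hSS | hSS <;> rcases hρ3.1 R hR R' hR' with hRR | hRR
    · exact Or.inl (blw_inter hSS hRR)
    · rcases hSS with hst | heq
      · rcases hRR with hst' | heq
        · obtain ⟨q, hq⟩ := hne
          obtain ⟨q', hq'⟩ := hne'
          exact absurd (hst q hq.1 q' hq'.1) (not_lt.mpr (hst' q' hq'.2 q hq.2).le)
        · exact Or.inl (blw_inter (Or.inl hst) (Or.inr heq.symm))
      · exact Or.inr (blw_inter (Or.inr heq.symm) hRR)
    · rcases hRR with hst | heq
      · rcases hSS with hst' | heq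
        · obtain ⟨q, hq⟩ := hne
          obtain ⟨q', hq'⟩ := hne'
          exact absurd (hst q hq.2 q' hq'.2) (not_lt.mpr (hst' q' hq'.1 q hq.1).le)
        · exact Or.inl (blw_inter (Or.inr heq.symm) (Or.inl hst))
      · exact Or.inr (blw_inter hSS (Or.inr heq.symm))
    · exact Or.inr (blw_inter hSS hRR)
  · intro σ hσ hσne
    obtain ⟨Q1, hQ1⟩ := hσne
    obtain ⟨S1, hS1, R1, hR1, hQ1eq, -⟩ := hσ hQ1
    have hA : {S | S ∈ π ∧ ∃ R ∈ ρ, S ∩ R ∈ σ}.Nonempty :=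
      ⟨S1, hS1, R1, hR1, hQ1eq ▸ hQ1⟩
    obtain ⟨S₀, hS₀A, hS₀min⟩ := hπ3.2 _ (fun S hS => hS.1) hA
    obtain ⟨R₀, hR₀B, hR₀min⟩ := hρ3.2 {R | R ∈ ρ ∧ S₀ ∩ R ∈ σ}
      (fun R hR => hR.1) hS₀A.2
    refine ⟨S₀ ∩ R₀, hR₀B.2, ?_⟩
    intro Q hQ
    obtain ⟨S, hS, R, hR, hQeq, -⟩ := hσ hQ
    subst hQeq
    rcases hS₀min S ⟨hS, R, hR, hQ⟩ with hst | heq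
    · exact Or.inl fun q hq q' hq' => hst q hq.1 q' hq'.1
    · subst heq
      exact blw_inter (Or.inr rfl) (hR₀min R ⟨hR, hQ⟩)
end

section
/- Let (T, ≤) be a totally ordered set, t ∈ T, and let Υ be a nonempty finite family of partitions of T_{≥t} into intervals, each of which is well-ordered by the relation ⊑ (S ⊑ R iff all elements of S are strictly below all elements of R, or S = R). Then the common refinement ⋂Υ := { ⋂_{π ∈ Υ} f(π) : f is a choice function selecting f(π) ∈ π for each π ∈ Υ, and ⋂_{π∈Υ} f(π) ≠ ∅ } is a partition of T_{≥t} that is well-ordered by ⊑. -/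
open Set

/-! The common refinement of two partitions well-ordered by `⊑` is again one: its blocks `S ∩ R`
are ordered lexicographically, first by the block `S` of the first partition and then by the
block `R` of the second, and a minimum of a subfamily is found by minimizing first `S`, then `R`.
The finite case follows by induction, adding one partition at a time. -/

section Partition

variable {α : Type*} {U : Set α}

def refinement (π σ : Set (Set α)) : Set (Set α) :=
  {Q | ∃ S ∈ π, ∃ R ∈ σ, Q = S ∩ R ∧ Q.Nonempty}

lemma PartOn.eq_of_mem {π : Set (Set α)} (h : PartOn U π) {S S' : Set α} {x : α}
    (hS : S ∈ π) (hS' : S' ∈ π) (hx : x ∈ S) (hx' : x ∈ S') : S = S' := by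
  by_contra hne
  exact (h.2.2 S hS S' hS' hne).ne_of_mem hx hx' rfl

lemma PartOn.refinement {π σ : Set (Set α)} (hπ : PartOn U π) (hσ : PartOn U σ) :
    PartOn U (refinement π σ) := by
  refine ⟨fun _ ⟨_, _, _, _, _, hQ⟩ => hQ, ?_, ?_⟩
  · ext x
    constructor
    · rintro ⟨_, ⟨S, hS, R, -, rfl, -⟩, hx⟩
      exact hπ.2.1 ▸ ⟨S, hS, hx.1⟩
    · intro hx
      obtain ⟨S, hS, hxS⟩ : x ∈ ⋃₀ π := hπ.2.1 ▸ hx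
      obtain ⟨R, hR, hxR⟩ : x ∈ ⋃₀ σ := hσ.2.1 ▸ hx
      exact ⟨S ∩ R, ⟨S, hS, R, hR, rfl, x, hxS, hxR⟩, hxS, hxR⟩
  · rintro _ ⟨S, hS, R, hR, rfl, -⟩ _ ⟨S', hS', R', hR', rfl, -⟩ hne
    refine disjoint_left.2 fun x hx hx' => hne ?_
    rw [hπ.eq_of_mem hS hS' hx.1 hx'.1, hσ.eq_of_mem hR hR' hx.2 hx'.2]

end Partition

section Order

variable {α : Type*} [LT α]

lemma blw_inter_inter_of_lex {S S' R R' : Set α}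
    (h : blw S S' ∧ S ≠ S' ∨ S = S' ∧ blw R R') : blw (S ∩ R) (S' ∩ R') := by
  rcases h with ⟨hS, hne⟩ | ⟨rfl, hR | rfl⟩
  · exact Or.inl fun q hq r hr => hS.resolve_right hne q hq.1 r hr.1
  · exact Or.inl fun q hq r hr => hR q hq.2 r hr.2
  · exact Or.inr rfl

lemma WOFam.refinement {π σ : Set (Set α)} (hπ : WOFam π) (hσ : WOFam σ) :
    WOFam (refinement π σ) := by
  refine ⟨?_, fun ρ hρ hρne => ?_⟩
  · rintro _ ⟨S, hS, R, hR, rfl, -⟩ _ ⟨S', hS', R', hR', rfl, -⟩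
    by_cases hSS : S = S'
    · rcases hσ.1 R hR R' hR' with h | h
      · exact Or.inl (blw_inter_inter_of_lex (Or.inr ⟨hSS, h⟩))
      · exact Or.inr (blw_inter_inter_of_lex (Or.inr ⟨hSS.symm, h⟩))
    · rcases hπ.1 S hS S' hS' with h | h
      · exact Or.inl (blw_inter_inter_of_lex (Or.inl ⟨h, hSS⟩))
      · exact Or.inr (blw_inter_inter_of_lex (Or.inl ⟨h, Ne.symm hSS⟩))
  · obtain ⟨S₀, ⟨hS₀, R₁, hR₁, hS₀R₁⟩, hS₀min⟩ :=
      hπ.2 {S | S ∈ π ∧ ∃ R ∈ σ, S ∩ R ∈ ρ} (fun _ hS => hS.1) <| by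
        obtain ⟨Q, hQ⟩ := hρne
        obtain ⟨S, hS, R, hR, rfl, -⟩ := hρ hQ
        exact ⟨S, hS, R, hR, hQ⟩
    obtain ⟨R₀, ⟨-, hS₀R₀⟩, hR₀min⟩ :=
      hσ.2 {R | R ∈ σ ∧ S₀ ∩ R ∈ ρ} (fun _ hR => hR.1) ⟨R₁, hR₁, hS₀R₁⟩
    refine ⟨S₀ ∩ R₀, hS₀R₀, fun Q hQ => ?_⟩
    obtain ⟨S, hS, R, hR, rfl, -⟩ := hρ hQ
    by_cases hSS : S₀ = S
    · subst hSS
      exact blw_inter_inter_of_lex (Or.inr ⟨rfl, hR₀min R ⟨hR, hQ⟩⟩)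
    · exact blw_inter_inter_of_lex (Or.inl ⟨hS₀min S ⟨hS, R, hR, hQ⟩, hSS⟩)

end Order

section Finite

variable {α : Type*}

def commonRefinement (Υ : Set (Set (Set α))) : Set (Set α) :=
  {Q | ∃ f : Set (Set α) → Set α, (∀ π ∈ Υ, f π ∈ π) ∧ Q = (⋂ π ∈ Υ, f π) ∧ Q.Nonempty}

lemma commonRefinement_singleton {π : Set (Set α)} (hπ : ∀ S ∈ π, S.Nonempty) :
    commonRefinement {π} = π := by
  ext Q
  simp only [commonRefinement, mem_singleton_iff, forall_eq, iInter_iInter_eq_left,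
    mem_ofPred_eq]
  constructor
  · rintro ⟨f, hf, rfl, -⟩
    exact hf
  · exact fun hQ => ⟨fun _ => Q, hQ, rfl, hπ Q hQ⟩

lemma commonRefinement_insert {π : Set (Set α)} {Υ : Set (Set (Set α))} (h : π ∉ Υ) :
    commonRefinement (insert π Υ) = refinement π (commonRefinement Υ) := by
  classical
  ext Q
  constructor
  · rintro ⟨f, hf, rfl, hQ⟩
    rw [biInter_insert] at hQ ⊢
    exact ⟨f π, hf π (mem_insert _ _), _,
      ⟨f, fun σ hσ => hf σ (Or.inr hσ), rfl, hQ.mono inter_subset_right⟩, rfl, hQ⟩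
  · rintro ⟨S, hS, _, ⟨g, hg, rfl, -⟩, rfl, hQ⟩
    have hupdate : ∀ σ ∈ Υ, Function.update g π S σ = g σ := fun σ hσ =>
      Function.update_of_ne (ne_of_mem_of_not_mem hσ h) _ _
    refine ⟨Function.update g π S, ?_, ?_, hQ⟩
    · rintro σ (rfl | hσ)
      · rwa [Function.update_self]
      · exact hupdate σ hσ ▸ hg σ hσ
    · rw [biInter_insert, Function.update_self, iInter₂_congr hupdate]

lemma Set.Finite.commonRefinement [LT α] {U : Set α} {Υ : Set (Set (Set α))}
    (hfin : Υ.Finite) (hne : Υ.Nonempty) (hΥ : ∀ π ∈ Υ, PartOn U π ∧ WOFam π) :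
    PartOn U (commonRefinement Υ) ∧ WOFam (commonRefinement Υ) := by
  induction Υ, hfin using Set.Finite.induction_on with
  | empty => exact absurd hne not_nonempty_empty
  | @insert π Υ hπΥ _ ih =>
    obtain ⟨hπ, hπw⟩ := hΥ π (mem_insert _ _)
    rcases Υ.eq_empty_or_nonempty with rfl | hΥne
    · rw [insert_empty_eq, commonRefinement_singleton hπ.1]
      exact ⟨hπ, hπw⟩
    · obtain ⟨hτ, hτw⟩ := ih hΥne fun σ hσ => hΥ σ (Or.inr hσ)
      rw [commonRefinement_insert hπΥ]
      exact ⟨hπ.refinement hτ, hπw.refinement hτw⟩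

end Finite

theorem stmt4 {T : Type*} [LinearOrder T] (t : T) (Υ : Set (Set (Set T)))
    (hfin : Υ.Finite) (hne : Υ.Nonempty)
    (hΥ : ∀ π ∈ Υ, PartOn (Set.Ici t) π ∧ (∀ S ∈ π, IsIntervalIn S) ∧ WOFam π)
    (τ : Set (Set T))
    (hτ : τ = {Q | ∃ f : Set (Set T) → Set T, (∀ π ∈ Υ, f π ∈ π) ∧
      Q = (⋂ π ∈ Υ, f π) ∧ Q.Nonempty}) :
    PartOn (Set.Ici t) τ ∧ WOFam τ :=
  hτ ▸ hfin.commonRefinement hne fun π hπ => ⟨(hΥ π hπ).1, (hΥ π hπ).2.2⟩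
end

section
/- Consider a deterministic totally-ordered-time game: N a nonempty finite set of players, (T, ≤) a totally ordered set of times in which T has a minimum, every nonempty subset has an infimum, and every nonempty subset bounded above has a supremum; A_i a nonempty action set for each i; H = (∏_i A_i)^T the set of complete histories; and strategies σ_i : T × H → A_i depending only on the strict past (if h and g agree on T_{<t} then σ_i(t,h) = σ_i(t,g)). Suppose each σ_i satisfies: (1) Traceability: for all t and h, there is g ∈ H with g = h on T_{<t}, g_j = h_j for all j ≠ i, and g_i(s) = σ_i(s,g) for all s ≥ t; (2) Well-orderedness: for any t and any h that is t-consistent with σ_i for i, the partition of T_{≥t} into maximal order-connected sets on which h_i is constant is well-ordered under the induced interval order; (3) Initial uniqueness: for any t with T_{>t} ≠ ∅ and any h, g both t-consistent with σ_i for i and agreeing on T_{<t}, there exists s > t with h_i = g_i on [t, s). Then for every t ∈ T and h ∈ H, there exists a unique complete history g such that g agrees with h on T_{<t} and g(s) = (σ_i(s,g))_{i∈N} for all s ≥ t. -/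
open Set

/-- A strategy depends only on the strict past. -/
def PastDep {T : Type*} [LinearOrder T] {N : Type*} {A : N → Type*} {γ : Type*}
    (σi : T → (T → ∀ j, A j) → γ) : Prop :=
  ∀ t : T, ∀ h g : T → ∀ j, A j, (∀ s, s < t → h s = g s) → σi t h = σi t g

/-- Traceability: from any time `t` and history `h`, there is a completion `g`
agreeing with `h` on the strict past and in the other players' components which is
`t`-consistent with `σi` for `i`. -/
def Traceable {T : Type*} [LinearOrder T] {N : Type*} {A : N → Type*}
    (i : N) (σi : T → (T → ∀ j, A j) → A i) : Prop :=
  ∀ t : T, ∀ h : T → ∀ j, A j, ∃ g : T → ∀ j, A j,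
    (∀ s, s < t → g s = h s) ∧ (∀ j, j ≠ i → ∀ s, g s j = h s j) ∧
    ∀ s, t ≤ s → g s i = σi s g

/-- Well-orderedness: for any `t`-consistent history, the partition of `T_{≥ t}` into
maximal order-connected sets on which player `i`'s action is constant is well-ordered
under the interval order. -/
def WOStrat {T : Type*} [LinearOrder T] {N : Type*} {A : N → Type*}
    (i : N) (σi : T → (T → ∀ j, A j) → A i) : Prop :=
  ∀ t : T, ∀ h : T → ∀ j, A j, (∀ s, t ≤ s → h s i = σi s h) →
    WOFam (blocks (fun s : ↥(Set.Ici t) => h s.1 i))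

/-- Initial uniqueness: two `t`-consistent histories with the same strict past agree
in component `i` on some initial interval `[t, s)` with `s > t`. -/
def InitUnique {T : Type*} [LinearOrder T] {N : Type*} {A : N → Type*}
    (i : N) (σi : T → (T → ∀ j, A j) → A i) : Prop :=
  ∀ t : T, (∃ s, t < s) → ∀ h g : T → ∀ j, A j,
    (∀ s, s < t → h s = g s) →
    (∀ s, t ≤ s → h s i = σi s h) → (∀ s, t ≤ s → g s i = σi s g) →
    ∃ s, t < s ∧ ∀ r, t ≤ r → r < s → h r i = g r i

/-- Inertiality: in any subgame there is an initial interval on which `σi`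
prescribes a constant action after every continuation history. -/
def Inertial {T : Type*} [LinearOrder T] {N : Type*} {A : N → Type*}
    (i : N) (σi : T → (T → ∀ j, A j) → A i) : Prop :=
  ∀ t : T, (∃ s, t < s) → ∀ h : T → ∀ j, A j,
    ∃ s, t < s ∧ ∃ a : A i, ∀ r, t ≤ r → r < s →
      ∀ g : T → ∀ j, A j, (∀ q, q < t → g q = h q) → σi r g = a

/-- Frictionality: there is a default action `z` such that in any consistent history
player `i` deviates from `z` only finitely often on any interval `[t, s]`. -/
def Frictional {T : Type*} [LinearOrder T] {N : Type*} {A : N → Type*}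
    (i : N) (σi : T → (T → ∀ j, A j) → A i) : Prop :=
  ∃ z : A i, ∀ t : T, ∀ h : T → ∀ j, A j, (∀ r, t ≤ r → h r i = σi r h) →
    ∀ s, t < s → Set.Finite {q | t ≤ q ∧ q ≤ s ∧ h q i ≠ z}

/-- `S` is a connected (order topology on `T_{≥ t}`) subset of `T_{≥ t}`. -/
def ConnIn {T : Type*} [LinearOrder T] (t : T) (S : Set T) : Prop :=
  S ⊆ Set.Ici t ∧ OTconn {x : ↥(Set.Ici t) | x.1 ∈ S}

lemma aux_initial_const {α β : Type*} [LinearOrder α] (f : α → β)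
    (hWO : WOFam (blocks f)) (b' : α) (x₀ : α) (hx₀ : b' < x₀) :
    ∃ y, b' < y ∧ ∀ z, b' < z → z ≤ y → f z = f y := by
  classical
  letI : TopologicalSpace α := Preorder.topology α
  set B : α → Set α := fun x => ⋃₀ {S : Set α | x ∈ S ∧ OTconn S ∧ ∀ y ∈ S, f y = f x}
    with hBdef
  have hxB : ∀ x, x ∈ B x := fun x =>
    ⟨{x}, ⟨rfl, isPreconnected_singleton, fun y hy => by rw [show y = x from hy]⟩, rfl⟩
  have hBconst : ∀ x, ∀ y ∈ B x, f y = f x := by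
    rintro x y ⟨S, hS, hyS⟩; exact hS.2.2 y hyS
  have hBconn : ∀ x, OTconn (B x) := fun x =>
    isPreconnected_sUnion x _ (fun S hS => hS.1) (fun S hS => hS.2.1)
  have hBblock : ∀ x, B x ∈ blocks f := by
    intro x
    refine ⟨⟨x, hxB x⟩, hBconn x, fun R hR hsub => ?_⟩
    constructor
    · rintro rfl; exact ⟨f x, hBconst x⟩
    · rintro ⟨a, ha⟩
      have hax : a = f x := (ha x (hsub (hxB x))).symm
      have hRsub : R ⊆ B x :=
        subset_sUnion_of_mem ⟨hsub (hxB x), hR, fun y hy => (ha y hy).trans hax⟩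
      exact Subset.antisymm hRsub hsub
  obtain ⟨S₀, hS₀mem, hS₀min⟩ := hWO.2 (B '' Ioi b')
    (by rintro _ ⟨z, hz, rfl⟩; exact hBblock z) ⟨B x₀, ⟨x₀, hx₀, rfl⟩⟩
  obtain ⟨y₀, hy₀, rfl⟩ := hS₀mem
  refine ⟨y₀, hy₀, fun z hz1 hz2 => ?_⟩
  rcases hS₀min (B z) ⟨z, hz1, rfl⟩ with hlt | heq
  · exact absurd (hlt y₀ (hxB y₀) z (hxB z)) (not_lt.2 hz2)
  · have hz' : z ∈ B y₀ := by rw [heq]; exact hxB z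
    exact hBconst y₀ z hz'

lemma aux_forced {T : Type*} [LinearOrder T] {N : Type*} {A : N → Type*}
    (i : N) (σi : T → (T → ∀ j, A j) → A i) (h2 : WOStrat i σi)
    (v : T) (hex : ∃ s, v < s) (H : T → ∀ j, A j)
    (hH : ∀ s, v ≤ s → H s i = σi s H) :
    ∃ y, v < y ∧ ∀ z, v < z → z ≤ y → H z i = H y i := by
  obtain ⟨s, hs⟩ := hex
  obtain ⟨y, hy, hc⟩ := aux_initial_const (fun r : ↥(Set.Ici v) => H r.1 i)
    (h2 v H hH) ⟨v, le_rfl⟩ ⟨s, le_of_lt hs⟩ (by exact hs)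
  exact ⟨y.1, hy, fun z hz1 hz2 => hc ⟨z, le_of_lt hz1⟩ (by exact hz1) (by exact hz2)⟩

section
variable {T : Type*} [ConditionallyCompleteLinearOrderBot T]
  {N : Type*} [Finite N] [Nonempty N] {A : N → Type*} [∀ j, Nonempty (A j)]

lemma aux_compat (σ : ∀ i, T → (T → ∀ j, A j) → A i)
    (hpd : ∀ i, PastDep (σ i)) (h1 : ∀ i, Traceable i (σ i))
    (h3 : ∀ i, InitUnique i (σ i)) (t u u' : T)
    (g g' : T → ∀ j, A j)
    (hpre : ∀ s, s < t → g s = g' s)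
    (hgc : ∀ r, t ≤ r → r < u → ∀ i, g r i = σ i r g)
    (hg'c : ∀ r, t ≤ r → r < u' → ∀ i, g' r i = σ i r g') :
    ∀ s, s < u → s < u' → g s = g' s := by
  classical
  by_contra hcon
  push_neg at hcon
  obtain ⟨s₀, hs₀u, hs₀u', hs₀ne⟩ := hcon
  set D : Set T := {s | s < u ∧ s < u' ∧ g s ≠ g' s} with hDdef
  have hD : D.Nonempty := ⟨s₀, hs₀u, hs₀u', hs₀ne⟩
  have hDt : ∀ d ∈ D, t ≤ d := by
    intro d hd
    by_contra hlt
    exact hd.2.2 (hpre d (not_le.1 hlt))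
  set m := sInf D with hmdef
  have hmle : ∀ d ∈ D, m ≤ d := fun d hd => csInf_le (OrderBot.bddBelow D) hd
  have htm : t ≤ m := le_csInf hD hDt
  obtain ⟨d₀, hd₀⟩ := id hD
  have hmu : m < u := lt_of_le_of_lt (hmle d₀ hd₀) hd₀.1
  have hmu' : m < u' := lt_of_le_of_lt (hmle d₀ hd₀) hd₀.2.1
  have hbelow : ∀ r, r < m → g r = g' r := by
    intro r hr
    by_contra hne
    exact absurd (hmle r ⟨hr.trans hmu, hr.trans hmu', hne⟩) (not_le.2 hr)
  have hatm : g m = g' m := funext fun i => by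
    rw [hgc m htm hmu i, hg'c m htm hmu' i]
    exact hpd i m g g' hbelow
  -- traces
  choose P hP1 hP2 hP3 using fun i => h1 i u g
  choose P' hP'1 hP'2 hP'3 using fun i => h1 i u' g'
  have hPc : ∀ i, ∀ s, m ≤ s → P i s i = σ i s (P i) := by
    intro i s hms
    by_cases hsu : s < u
    · have e1 : P i s i = g s i := congrFun (hP1 i s hsu) i
      rw [e1, hgc s (htm.trans hms) hsu i]
      exact hpd i s g (P i) (fun q hq => (hP1 i q (hq.trans hsu)).symm)
    · exact hP3 i s (not_lt.1 hsu)
  have hP'c : ∀ i, ∀ s, m ≤ s → P' i s i = σ i s (P' i) := by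
    intro i s hms
    by_cases hsu : s < u'
    · have e1 : P' i s i = g' s i := congrFun (hP'1 i s hsu) i
      rw [e1, hg'c s (htm.trans hms) hsu i]
      exact hpd i s g' (P' i) (fun q hq => (hP'1 i q (hq.trans hsu)).symm)
    · exact hP'3 i s (not_lt.1 hsu)
  have hPpre : ∀ i, ∀ s, s < m → P i s = P' i s := by
    intro i s hs
    rw [hP1 i s (hs.trans hmu), hP'1 i s (hs.trans hmu')]
    exact hbelow s hs
  choose e he heag using fun i =>
    h3 i m ⟨u, hmu⟩ (P i) (P' i) (hPpre i) (hPc i) (hP'c i)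
  have : Fintype N := Fintype.ofFinite N
  set E := Finset.univ.inf' Finset.univ_nonempty e with hEdef
  have hmE : m < E := (Finset.lt_inf'_iff _).2 (fun i _ => he i)
  obtain ⟨d, hdD, hdE⟩ := exists_lt_of_csInf_lt hD hmE
  refine hdD.2.2 (funext fun i => ?_)
  have hag := heag i d (hmle d hdD)
    (lt_of_lt_of_le hdE (Finset.inf'_le _ (Finset.mem_univ i)))
  rwa [hP1 i d hdD.1, hP'1 i d hdD.2.1] at hag

lemma aux_crux (σ : ∀ i, T → (T → ∀ j, A j) → A i)
    (hpd : ∀ i, PastDep (σ i)) (h1 : ∀ i, Traceable i (σ i))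
    (h2 : ∀ i, WOStrat i (σ i)) (h3 : ∀ i, InitUnique i (σ i))
    (v : T) (g : T → ∀ j, A j) (hex : ∃ s, v < s) :
    ∃ u', v < u' ∧ ∃ G : T → ∀ j, A j, (∀ s, s < v → G s = g s) ∧
      ∀ r, v ≤ r → r < u' → ∀ i, G r i = σ i r G := by
  classical
  by_cases hA : ∃ w, v < w ∧ ∀ z, ¬(v < z ∧ z < w)
  · -- v has an immediate successor w
    obtain ⟨w, hw, hempty⟩ := hA
    set G0 : T → ∀ j, A j := fun s => if s < v then g s else fun j => σ j v g with hG0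
    have hG0pre : ∀ s, s < v → G0 s = g s := fun s hs => by simp [hG0, hs]
    refine ⟨w, hw, G0, hG0pre, ?_⟩
    intro r hvr hrw i
    have hrv : r = v := by
      rcases hvr.lt_or_eq with hlt | he
      · exact absurd ⟨hlt, hrw⟩ (hempty r)
      · exact he.symm
    have e0 : G0 r i = σ i v g := by rw [hrv]; simp [hG0, lt_irrefl]
    rw [e0, hrv]
    exact (hpd i v G0 g hG0pre).symm
  · push_neg at hA
    have hdense : ∀ w, v < w → ∃ z, v < z ∧ z < w := hA
    -- first traces from g, to define the forced constants
    choose G hG1 hG2 hG3 using fun i => h1 i v g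
    choose y hy hyc using fun i => aux_forced i (σ i) (h2 i) v hex (G i) (hG3 i)
    set b : ∀ j, A j := fun j => G j (y j) j with hbdef
    set gh : T → ∀ j, A j :=
      fun s j => if s < v then g s j else if v < s then b j else σ j v g with hghdef
    have hghpre : ∀ s, s < v → gh s = g s := by
      intro s hs; funext j; simp [hghdef, hs]
    have hghv : ∀ j, gh v j = σ j v g := by
      intro j; simp [hghdef, lt_irrefl]
    have hghab : ∀ s, v < s → ∀ j, gh s j = b j := by
      intro s hs j; simp [hghdef, not_lt.2 (le_of_lt hs), hs]
    -- traces from gh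
    choose H hH1 hH2 hH3 using fun i => h1 i v gh
    choose y' hy' hy'c using fun i => aux_forced i (σ i) (h2 i) v hex (H i) (hH3 i)
    set b' : ∀ j, A j := fun j => H j (y' j) j with hb'def
    -- b' = b via initial uniqueness
    have hpreHG : ∀ i, ∀ s, s < v → H i s = G i s := by
      intro i s hs; rw [hH1 i s hs, hG1 i s hs]; exact hghpre s hs
    choose e he heag using fun i =>
      h3 i v hex (H i) (G i) (hpreHG i) (hH3 i) (hG3 i)
    have hb'b : ∀ i, b' i = b i := by
      intro i
      obtain ⟨z, hz1, hz2⟩ := hdense (min (e i) (min (y i) (y' i)))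
        (lt_min (he i) (lt_min (hy i) (hy' i)))
      have hze : z < e i := lt_of_lt_of_le hz2 (min_le_left _ _)
      have hzy : z ≤ y i := le_of_lt (lt_of_lt_of_le hz2 ((min_le_right _ _).trans (min_le_left _ _)))
      have hzy' : z ≤ y' i := le_of_lt (lt_of_lt_of_le hz2 ((min_le_right _ _).trans (min_le_right _ _)))
      have e1 : H i z i = b' i := hy'c i z hz1 hzy'
      have e2 : G i z i = b i := hyc i z hz1 hzy
      have e3 : H i z i = G i z i := heag i z (le_of_lt hz1) hze
      rw [← e1, e3, e2]
    have : Fintype N := Fintype.ofFinite N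
    set u' := Finset.univ.inf' Finset.univ_nonempty y' with hu'def
    have hvu' : v < u' := (Finset.lt_inf'_iff _).2 (fun i _ => hy' i)
    have hu'le : ∀ i, u' ≤ y' i := fun i => Finset.inf'_le _ (Finset.mem_univ i)
    -- key: gh agrees with the trace H i below u'
    have hpast : ∀ i, ∀ s, s < u' → gh s = H i s := by
      intro i s hsu
      funext j
      rcases lt_trichotomy s v with hsv | hsv | hsv
      · rw [hH1 i s hsv]
      · subst hsv
        by_cases hji : j = i
        · subst hji
          have e1 : H j s j = σ j s (H j) := hH3 j s le_rfl
          have e2 : σ j s (H j) = σ j s gh := hpd j s (H j) gh (fun q hq => (hH1 j q hq))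
          have e3 : σ j s gh = σ j s g := hpd j s gh g hghpre
          rw [hghv j, e1, e2, e3]
        · exact (hH2 i j hji s).symm
      · by_cases hji : j = i
        · subst hji
          have e1 : H j s j = b' j := hy'c j s hsv (le_of_lt (lt_of_lt_of_le hsu (hu'le j)))
          rw [hghab s hsv j, e1, hb'b j]
        · exact (hH2 i j hji s).symm
    refine ⟨u', hvu', gh, hghpre, ?_⟩
    intro r hvr hru' i
    calc gh r i = H i r i := congrFun (hpast i r hru') i
      _ = σ i r (H i) := hH3 i r hvr
      _ = σ i r gh := (hpd i r gh (H i) (fun s hs => hpast i s (hs.trans hru'))).symm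
end

theorem stmt5 {T : Type*} [ConditionallyCompleteLinearOrderBot T]
    {N : Type*} [Finite N] [Nonempty N] {A : N → Type*} [∀ j, Nonempty (A j)]
    (σ : ∀ i, T → (T → ∀ j, A j) → A i)
    (hpd : ∀ i, PastDep (σ i))
    (h1 : ∀ i, Traceable i (σ i))
    (h2 : ∀ i, WOStrat i (σ i))
    (h3 : ∀ i, InitUnique i (σ i))
    (t : T) (h : T → ∀ j, A j) :
    ∃! g : T → ∀ j, A j,
      (∀ s, s < t → g s = h s) ∧ ∀ s, t ≤ s → ∀ i, g s i = σ i s g := by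
  classical
  set S : Set T := {u | ∃ gw : T → ∀ j, A j, (∀ s, s < t → gw s = h s) ∧
    ∀ r, t ≤ r → r < u → ∀ i, gw r i = σ i r gw} with hSdef
  have hwit : ∀ u : T, u ∈ S → ∃ gw : T → ∀ j, A j, (∀ s, s < t → gw s = h s) ∧
      ∀ r, t ≤ r → r < u → ∀ i, gw r i = σ i r gw := fun u hu => hu
  choose! w hwpre hwcons using hwit
  have hcompat : ∀ u ∈ S, ∀ u' ∈ S, ∀ s, s < u → s < u' → w u s = w u' s := by
    intro u hu u' hu' s hsu hsu'
    refine aux_compat σ hpd h1 h3 t u u' (w u) (w u') ?_ (hwcons u hu) (hwcons u' hu') s hsu hsu'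
    intro q hq
    rw [hwpre u hu q hq, hwpre u' hu' q hq]
  set g₀ : T → ∀ j, A j :=
    fun s => if hs : ∃ u ∈ S, s < u then w hs.choose s else h s with hg₀def
  have hg₀ : ∀ u ∈ S, ∀ s, s < u → g₀ s = w u s := by
    intro u hu s hsu
    have hs : ∃ u ∈ S, s < u := ⟨u, hu, hsu⟩
    have e1 : g₀ s = w hs.choose s := dif_pos hs
    rw [e1]
    exact hcompat hs.choose hs.choose_spec.1 u hu s hs.choose_spec.2 hsu
  have hg₀pre : ∀ s, s < t → g₀ s = h s := by
    intro s hs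
    by_cases hc : ∃ u ∈ S, s < u
    · rw [hg₀ hc.choose hc.choose_spec.1 s hc.choose_spec.2]
      exact hwpre hc.choose hc.choose_spec.1 s hs
    · exact dif_neg hc
  have hg₀cons : ∀ r, t ≤ r → (∃ u ∈ S, r < u) → ∀ i, g₀ r i = σ i r g₀ := by
    intro r htr hc i
    obtain ⟨u, hu, hru⟩ := hc
    have e1 : g₀ r i = w u r i := congrFun (hg₀ u hu r hru) i
    rw [e1, hwcons u hu r htr hru i]
    exact hpd i r (w u) g₀ (fun s hs => (hg₀ u hu s (hs.trans hru)).symm)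
  -- Existence
  have hEx : ∃ g : T → ∀ j, A j, (∀ s, s < t → g s = h s) ∧
      ∀ s, t ≤ s → ∀ i, g s i = σ i s g := by
    by_cases hQ : ({r | t ≤ r ∧ ¬∃ u ∈ S, r < u} : Set T).Nonempty
    · set Q : Set T := {r | t ≤ r ∧ ¬∃ u ∈ S, r < u} with hQdef
      set v := sInf Q with hvdef
      have htv : t ≤ v := le_csInf hQ (fun q hq => hq.1)
      have hcov : ∀ r, t ≤ r → r < v → ∃ u ∈ S, r < u := by
        intro r htr hrv
        by_contra hnc
        exact absurd (csInf_le (OrderBot.bddBelow Q) ⟨htr, hnc⟩) (not_le.2 hrv)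
      have hvS : v ∈ S := ⟨g₀, hg₀pre, fun r htr hrv i => hg₀cons r htr (hcov r htr hrv) i⟩
      by_cases hex : ∃ s, v < s
      · exfalso
        obtain ⟨u', hvu', G, hGpre, hGcons⟩ := aux_crux σ hpd h1 h2 h3 v g₀ hex
        have hu'S : u' ∈ S := by
          refine ⟨G, ?_, ?_⟩
          · intro s hs
            rw [hGpre s (lt_of_lt_of_le hs htv)]
            exact hg₀pre s hs
          · intro r htr hru' i
            by_cases hrv : r < v
            · have e1 : G r i = g₀ r i := congrFun (hGpre r hrv) i
              rw [e1, hg₀cons r htr (hcov r htr hrv) i]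
              exact hpd i r g₀ G (fun s hs => (hGpre s (hs.trans hrv)).symm)
            · exact hGcons r (not_lt.1 hrv) hru' i
        obtain ⟨q, hqQ, hq⟩ := exists_lt_of_csInf_lt hQ hvu'
        exact hqQ.2 ⟨u', hu'S, hq⟩
      · -- v is the maximum of T
        push_neg at hex
        refine ⟨fun s => if s = v then (fun i => σ i v g₀) else g₀ s, ?_, ?_⟩
        · intro s hs
          have hsv : s ≠ v := fun e => absurd (e ▸ hs) (not_lt.2 htv)
          show (if s = v then (fun i => σ i v g₀) else g₀ s) = h s
          rw [if_neg hsv]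
          exact hg₀pre s hs
        · intro r htr i
          have hpast : ∀ s, s < r → (fun s => if s = v then (fun i => σ i v g₀)
              else g₀ s) s = g₀ s := by
            intro s hs
            exact if_neg (fun e => absurd (e ▸ hs) (not_lt.2 (hex r)))
          rcases (hex r).lt_or_eq with hrv | hrv
          · have e1 : (if r = v then (fun i => σ i v g₀) else g₀ r) = g₀ r :=
              if_neg (ne_of_lt hrv)
            show (if r = v then (fun i => σ i v g₀) else g₀ r) i = _
            rw [e1]
            have e2 := hg₀cons r htr (hcov r htr hrv) i
            rw [e2]
            exact hpd i r g₀ _ (fun s hs => (hpast s hs).symm)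
          · subst hrv
            show (if v = v then (fun i => σ i v g₀) else g₀ v) i = _
            rw [if_pos rfl]
            exact hpd i v g₀ _ (fun s hs => (hpast s hs).symm)
    · -- every r ≥ t is covered
      refine ⟨g₀, hg₀pre, fun r htr i => hg₀cons r htr ?_ i⟩
      by_contra hnc
      exact hQ ⟨r, htr, hnc⟩
  -- Uniqueness
  obtain ⟨g, hgpre, hgcons⟩ := hEx
  refine ⟨g, ⟨hgpre, hgcons⟩, ?_⟩
  intro g' ⟨hg'pre, hg'cons⟩
  have hpre : ∀ s, s < t → g' s = g s := by
    intro s hs; rw [hg'pre s hs, hgpre s hs]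
  have hagree : ∀ s u : T, s < u → g' s = g s := by
    intro s u hsu
    exact aux_compat σ hpd h1 h3 t u u g' g hpre
      (fun r htr _ i => hg'cons r htr i) (fun r htr _ i => hgcons r htr i) s hsu hsu
  funext s
  by_cases hs : ∃ u, s < u
  · exact hagree s hs.choose hs.choose_spec
  · push_neg at hs
    by_cases hst : s < t
    · exact hpre s hst
    · funext i
      rw [hg'cons s (not_lt.1 hst) i, hgcons s (not_lt.1 hst) i]
      exact hpd i s g' g (fun r hr => hagree r s hr)
end

section
/- Let σ_i be a strategy for player i (depending only on the strict past), t ∈ T, h ∈ H, and s ≥ t. Suppose there exists g ∈ H with g = h on T_{<t}, g_j = h_j for j ≠ i, and g_i(r) = σ_i(r,g) for all r ∈ [t,s). Then there exists f ∈ H with f = h on T_{<t}, f_j = h_j for j ≠ i, and f_i(r) = σ_i(r,f) for all r ∈ [t,s]. -/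
open Set

theorem stmt8 {T : Type*} [LinearOrder T] {N : Type*} {A : N → Type*}
    (i : N) (σi : T → (T → ∀ j, A j) → A i) (hpd : PastDep σi)
    (t s : T) (hts : t ≤ s) (h : T → ∀ j, A j)
    (hex : ∃ g : T → ∀ j, A j, (∀ r, r < t → g r = h r) ∧
      (∀ j, j ≠ i → ∀ r, g r j = h r j) ∧
      ∀ r, t ≤ r → r < s → g r i = σi r g) :
    ∃ f : T → ∀ j, A j, (∀ r, r < t → f r = h r) ∧
      (∀ j, j ≠ i → ∀ r, f r j = h r j) ∧
      ∀ r, t ≤ r → r ≤ s → f r i = σi r f := by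
  classical
  obtain ⟨g, hg1, hg2, hg3⟩ := hex
  refine ⟨fun r => if r = s then Function.update (g s) i (σi s g) else g r, ?_, ?_, ?_⟩
  · intro r hr
    dsimp only
    rw [if_neg (by exact fun hr' => absurd (hr'.symm ▸ hr) (not_lt.2 hts))]
    exact hg1 r hr
  · intro j hj r
    by_cases hr : r = s
    · subst hr; simp [Function.update_of_ne hj, hg2 j hj r]
    · simp [hr, hg2 j hj r]
  · intro r htr hrs
    have hagree : ∀ q, q < r → (fun r => if r = s then Function.update (g s) i (σi s g) else g r) q = g q := by
      intro q hq
      dsimp only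
      rw [if_neg (fun (hq' : q = s) => absurd (hq'.symm ▸ hq) (not_lt.2 hrs))]
    rcases lt_or_eq_of_le hrs with hlt | heq
    · dsimp only
      rw [if_neg (ne_of_lt hlt), hg3 r htr hlt]
      exact hpd r g _ (fun q hq => (hagree q hq).symm)
    · subst heq
      dsimp only
      rw [if_pos rfl, Function.update_self]
      exact hpd r g _ (fun q hq => (hagree q hq).symm)
end

section
/- Let σ be a strategy tuple (each component depending only on the strict past), t ∈ T, h ∈ H, and s ≥ t. If there exists g ∈ H agreeing with h on T_{<t} and satisfying g(r) = σ(r,g) for all r ∈ [t,s), then there exists f ∈ H agreeing with h on T_{<t} and satisfying f(r) = σ(r,f) for all r ∈ [t,s]. -/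
open Set

theorem stmt9 {T : Type*} [LinearOrder T] {N : Type*} {A : N → Type*}
    (σ : ∀ i, T → (T → ∀ j, A j) → A i) (hpd : ∀ i, PastDep (σ i))
    (t s : T) (hts : t ≤ s) (h : T → ∀ j, A j)
    (hex : ∃ g : T → ∀ j, A j, (∀ r, r < t → g r = h r) ∧
      ∀ r, t ≤ r → r < s → ∀ i, g r i = σ i r g) :
    ∃ f : T → ∀ j, A j, (∀ r, r < t → f r = h r) ∧
      ∀ r, t ≤ r → r ≤ s → ∀ i, f r i = σ i r f := by
  obtain ⟨g, hg1, hg2⟩ := hex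
  classical
  refine ⟨fun r => if r = s then (fun i => σ i s g) else g r, ?_, ?_⟩
  · intro r hr
    simp only
    rw [if_neg (by rintro rfl; exact absurd hts (not_le.mpr hr))]
    exact hg1 r hr
  · intro r htr hrs i
    have hagree : ∀ q, q < r → (fun r => if r = s then (fun i => σ i s g) else g r) q = g q := by
      intro q hq
      exact if_neg (by rintro rfl; exact absurd hrs (not_le.mpr hq))
    have hσ : σ i r (fun r => if r = s then (fun i => σ i s g) else g r) = σ i r g :=
      hpd i r _ g hagree
    rcases eq_or_lt_of_le hrs with rfl | hlt
    · simp [hσ]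
    · simp only [if_neg hlt.ne, hσ]
      exact hg2 r htr hlt i
end

section
/- Suppose (T, ≤) is a well-ordered set. Then every strategy σ_i of every player i satisfies Traceability: for every t ∈ T and h ∈ H, there exists g ∈ H with g = h on T_{<t}, g_j = h_j for all j ≠ i, and g_i(s) = σ_i(s,g) for all s ≥ t. -/
open Set

noncomputable def traceAux {T : Type*} [LinearOrder T] [WellFoundedLT T]
    {N : Type*} {A : N → Type*}
    (i : N) (σi : T → (T → ∀ j, A j) → A i) (t : T) (h : T → ∀ j, A j) : T → A i :=
  haveI := Classical.decEq N
  WellFounded.fix wellFounded_lt fun s rec =>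
    σi s fun r => if hr : r < s then
      Function.update (h r) i (if t ≤ r then rec r hr else h r i) else h r

lemma traceAux_eq {T : Type*} [LinearOrder T] [WellFoundedLT T]
    {N : Type*} {A : N → Type*}
    (i : N) (σi : T → (T → ∀ j, A j) → A i) (t : T) (h : T → ∀ j, A j) (s : T) :
    haveI := Classical.decEq N
    traceAux i σi t h s = σi s fun r => if r < s then
      Function.update (h r) i (if t ≤ r then traceAux i σi t h r else h r i) else h r :=
  WellFounded.fix_eq _ _ _

theorem stmt10 {T : Type*} [LinearOrder T] [WellFoundedLT T]
    {N : Type*} {A : N → Type*}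
    (i : N) (σi : T → (T → ∀ j, A j) → A i) (hpd : PastDep σi) :
    Traceable i σi := by
  haveI := Classical.decEq N
  intro t h
  set g : T → ∀ j, A j := fun r =>
    Function.update (h r) i (if t ≤ r then traceAux i σi t h r else h r i) with hg
  refine ⟨g, ?_, ?_, ?_⟩
  · intro s hs
    simp only [hg, if_neg (not_le.2 hs), Function.update_eq_self]
  · intro j hj s
    simp only [hg, Function.update_of_ne hj]
  · intro s hs
    have h1 : g s i = traceAux i σi t h s := by
      simp only [hg, Function.update_self, if_pos hs]
    rw [h1, traceAux_eq]
    apply hpd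
    intro r hr
    simp only [hg, if_pos hr]
    congr!
end

section
/- Let σ_i be a strategy satisfying Inertiality: for every t with T_{>t} ≠ ∅ and every h ∈ H, there exist s > t and an action a_i such that for all r ∈ [t,s) and all g ∈ H agreeing with h on T_{<t}, σ_i(r,g) = a_i. Then σ_i satisfies Traceability: for every t and h there exists g ∈ H with g = h on T_{<t}, g_j = h_j for j ≠ i, and g_i(r) = σ_i(r,g) for all r ≥ t. -/
open Set

section CandAux

variable {T : Type*} [LinearOrder T] {N : Type*} {A : N → Type*}

/-- A partial consistent completion: `g` is consistent with `σi` on the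
downward-closed (within `Ici t`) set `S`, agrees with `h` on the strict past
and in all components other than `i`. -/
structure Cand (i : N) (σi : T → (T → ∀ j, A j) → A i) (t : T) (h : T → ∀ j, A j) where
  g : T → ∀ j, A j
  S : Set T
  mem_ge : ∀ r ∈ S, t ≤ r
  dc : ∀ r ∈ S, ∀ q, t ≤ q → q ≤ r → q ∈ S
  past : ∀ s, s < t → g s = h s
  other : ∀ j, j ≠ i → ∀ s, g s j = h s j
  cons : ∀ s ∈ S, g s i = σi s g

instance (i : N) (σi : T → (T → ∀ j, A j) → A i) (t : T) (h : T → ∀ j, A j) :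
    Preorder (Cand i σi t h) where
  le c d := c.S ⊆ d.S ∧ ∀ s ∈ c.S, c.g s = d.g s
  le_refl c := ⟨subset_rfl, fun _ _ => rfl⟩
  le_trans c d e hcd hde :=
    ⟨hcd.1.trans hde.1, fun s hs => (hcd.2 s hs).trans (hde.2 s (hcd.1 hs))⟩

theorem Cand.le_def {i : N} {σi : T → (T → ∀ j, A j) → A i} {t : T}
    {h : T → ∀ j, A j} (c d : Cand i σi t h) :
    c ≤ d ↔ c.S ⊆ d.S ∧ ∀ s ∈ c.S, c.g s = d.g s := Iff.rfl

end CandAux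

theorem stmt13 {T : Type*} [ConditionallyCompleteLinearOrderBot T]
    {N : Type*} {A : N → Type*}
    (i : N) (σi : T → (T → ∀ j, A j) → A i) (hpd : PastDep σi)
    (hin : Inertial i σi) :
    Traceable i σi := by
  classical
  intro t h
  -- Zorn's lemma on partial consistent completions
  have hzorn : ∃ m : Cand i σi t h, IsMax m := by
    apply zorn_le
    intro c hc
    -- union of a chain
    set G : T → ∀ j, A j := fun r =>
      if hr : ∃ x ∈ c, r ∈ x.S then hr.choose.g r else h r with hGdef
    have hG : ∀ x ∈ c, ∀ r ∈ x.S, G r = x.g r := by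
      intro x hx r hr
      have hex : ∃ x ∈ c, r ∈ x.S := ⟨x, hx, hr⟩
      have h1 : G r = hex.choose.g r := by simp [hGdef, dif_pos hex]
      obtain ⟨hyc, hyr⟩ := hex.choose_spec
      rcases hc.total hx hyc with hle | hle
      · rw [h1, ← hle.2 r hr]
      · rw [h1, hle.2 r hyr]
    have hGh : ∀ r, (¬ ∃ x ∈ c, r ∈ x.S) → G r = h r := by
      intro r hr; simp [hGdef, dif_neg hr]
    refine ⟨⟨G, ⋃ x ∈ c, x.S, ?_, ?_, ?_, ?_, ?_⟩, ?_⟩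
    · rintro r hr
      simp only [Set.mem_iUnion] at hr
      obtain ⟨x, hx, hr⟩ := hr
      exact x.mem_ge r hr
    · rintro r hr q htq hqr
      simp only [Set.mem_iUnion] at hr ⊢
      obtain ⟨x, hx, hr⟩ := hr
      exact ⟨x, hx, x.dc r hr q htq hqr⟩
    · intro s hs
      refine hGh s ?_
      rintro ⟨x, hx, hsx⟩
      exact absurd (x.mem_ge s hsx) (not_le.mpr hs)
    · intro j hj s
      by_cases hs : ∃ x ∈ c, s ∈ x.S
      · obtain ⟨x, hx, hsx⟩ := hs
        rw [hG x hx s hsx]; exact x.other j hj s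
      · rw [hGh s hs]
    · intro s hs
      simp only [Set.mem_iUnion] at hs
      obtain ⟨x, hx, hsx⟩ := hs
      have h1 : G s = x.g s := hG x hx s hsx
      have h2 : σi s G = σi s x.g := by
        apply hpd
        intro q hq
        by_cases hqt : q < t
        · rw [hGh q, x.past q hqt]
          rintro ⟨y, hy, hqy⟩
          exact absurd (y.mem_ge q hqy) (not_le.mpr hqt)
        · exact hG x hx q (x.dc s hsx q (not_lt.mp hqt) hq.le)
      rw [h1, h2]
      exact x.cons s hsx
    · -- upper bound
      intro x hx
      refine ⟨?_, fun s hs => (hG x hx s hs).symm⟩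
      exact Set.subset_iUnion₂ (s := fun x _ => x.S) x hx
  obtain ⟨m, hm⟩ := hzorn
  -- the maximal candidate is defined on all of `Ici t`
  have hall : ∀ s, t ≤ s → s ∈ m.S := by
    by_contra hcon
    push_neg at hcon
    obtain ⟨s0, hts0, hs0⟩ := hcon
    set B : Set T := {r | t ≤ r ∧ r ∉ m.S} with hBdef
    have hB : B.Nonempty := ⟨s0, hts0, hs0⟩
    set u := sInf B with hu
    have htu : t ≤ u := le_csInf hB fun b hb => hb.1
    have hlbB : ∀ b ∈ B, u ≤ b := fun b hb => csInf_le (OrderBot.bddBelow B) hb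
    by_cases huS : u ∈ m.S
    · -- `m.S = [t,u]`; extend on an interval `(u,s)` using inertiality
      have hle : ∀ r ∈ m.S, r ≤ u := by
        intro r hr
        by_contra hru
        push_neg at hru
        refine absurd (le_csInf hB fun b hb => ?_) (not_le.mpr hru)
        by_contra hbr
        push_neg at hbr
        exact hb.2 (m.dc r hr b hb.1 hbr.le)
      have hBgt : ∀ b ∈ B, u < b := by
        intro b hb
        rcases lt_or_eq_of_le (hlbB b hb) with h' | h'
        · exact h'
        · exact absurd (h' ▸ huS) hb.2
      obtain ⟨b0, hb0⟩ := id hB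
      obtain ⟨s, hus, a, ha⟩ := hin u ⟨b0, hBgt b0 hb0⟩ m.g
      obtain ⟨v, hvB, hvs⟩ : ∃ b ∈ B, b < s := by
        by_contra hno
        push_neg at hno
        exact absurd (le_csInf hB hno) (not_le.mpr hus)
      set G : T → ∀ j, A j := fun r =>
        if u < r ∧ r < s then Function.update (m.g r) i a else m.g r with hGdef
      have hGeq : ∀ q, ¬ (u < q ∧ q < s) → G q = m.g q := by
        intro q hq; simp [hGdef, if_neg hq]
      have hpast : ∀ r, r < t → G r = h r := by
        intro r hrt
        rw [hGeq r (fun hc => absurd (lt_of_le_of_lt htu hc.1) (not_lt.mpr hrt.le))]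
        exact m.past r hrt
      have hother : ∀ j, j ≠ i → ∀ r, G r j = h r j := by
        intro j hj r
        by_cases hr : u < r ∧ r < s
        · simp only [hGdef, if_pos hr]
          rw [Function.update_of_ne hj]
          exact m.other j hj r
        · rw [hGeq r hr]; exact m.other j hj r
      have hcons : ∀ r ∈ {r : T | t ≤ r ∧ r < s}, G r i = σi r G := by
        intro r hr
        by_cases hur : u < r
        · have h1 : σi r G = a := by
            refine ha r hur.le hr.2 G ?_
            intro q hq
            exact hGeq q (fun hc => absurd (hq.trans hc.1) (lt_irrefl q))
          have h2 : G r = Function.update (m.g r) i a := by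
            simp [hGdef, hur, hr.2]
          rw [h1, h2, Function.update_self]
        · push_neg at hur
          have hrS : r ∈ m.S := m.dc u huS r hr.1 hur
          have h1 : G r = m.g r := hGeq r (fun hc => absurd hur (not_le.mpr hc.1))
          have h2 : σi r G = σi r m.g := by
            apply hpd
            intro q hq
            exact hGeq q (fun hc => absurd ((hq.trans_le hur).trans hc.1) (lt_irrefl q))
          rw [h1, h2]
          exact m.cons r hrS
      set m' : Cand i σi t h :=
        ⟨G, {r | t ≤ r ∧ r < s}, fun r hr => hr.1,
          fun r hr q htq hqr => ⟨htq, lt_of_le_of_lt hqr hr.2⟩,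
          hpast, hother, hcons⟩ with hm'
      have hmle : m ≤ m' := by
        refine ⟨?_, ?_⟩
        · intro r hr
          exact ⟨m.mem_ge r hr, lt_of_le_of_lt (hle r hr) hus⟩
        · intro r hr
          exact (hGeq r (fun hc => absurd (hle r hr) (not_le.mpr hc.1))).symm
      have := (hm hmle).1
      exact hvB.2 (this ⟨hvB.1, hvs⟩)
    · -- `u ∉ m.S`: add the single point `u`
      have hltu : ∀ r ∈ m.S, r < u := by
        intro r hr
        by_contra hru
        push_neg at hru
        exact huS (m.dc r hr u htu hru)
      set G : T → ∀ j, A j := fun r =>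
        if r = u then Function.update (m.g u) i (σi u m.g) else m.g r with hGdef
      have hGeq : ∀ q, q ≠ u → G q = m.g q := by
        intro q hq; simp [hGdef, if_neg hq]
      have hmge : ∀ r ∈ insert u m.S, t ≤ r := by
        rintro r (rfl | hr)
        · exact htu
        · exact m.mem_ge r hr
      have hdc : ∀ r ∈ insert u m.S, ∀ q, t ≤ q → q ≤ r → q ∈ insert u m.S := by
        rintro r (rfl | hr) q htq hqr
        · rcases eq_or_lt_of_le hqr with rfl | hqu
          · exact Set.mem_insert _ _
          · refine Set.mem_insert_of_mem _ ?_
            by_contra hqm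
            exact absurd (hlbB q ⟨htq, hqm⟩) (not_le.mpr hqu)
        · exact Set.mem_insert_of_mem _ (m.dc r hr q htq hqr)
      have hpast : ∀ r, r < t → G r = h r := by
        intro r hrt
        rw [hGeq r (fun hc => absurd (hc ▸ hrt) (not_lt.mpr htu))]
        exact m.past r hrt
      have hother : ∀ j, j ≠ i → ∀ r, G r j = h r j := by
        intro j hj r
        by_cases hr : r = u
        · subst hr
          simp only [hGdef, if_pos rfl]
          rw [Function.update_of_ne hj]
          exact m.other j hj u
        · rw [hGeq r hr]; exact m.other j hj r
      have hcons : ∀ r ∈ insert u m.S, G r i = σi r G := by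
        rintro r (rfl | hr)
        · have h1 : G u = Function.update (m.g u) i (σi u m.g) := by
            simp [hGdef]
          have h2 : σi u G = σi u m.g := by
            apply hpd
            intro q hq
            exact hGeq q (ne_of_lt hq)
          rw [h1, h2, Function.update_self]
        · have hru : r < u := hltu r hr
          have h1 : G r = m.g r := hGeq r (ne_of_lt hru)
          have h2 : σi r G = σi r m.g := by
            apply hpd
            intro q hq
            exact hGeq q (ne_of_lt (hq.trans hru))
          rw [h1, h2]
          exact m.cons r hr
      set m' : Cand i σi t h := ⟨G, insert u m.S, hmge, hdc, hpast, hother, hcons⟩ with hm'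
      have hmle : m ≤ m' := by
        refine ⟨Set.subset_insert _ _, ?_⟩
        intro r hr
        exact (hGeq r (fun hc => absurd (hc ▸ hr) huS)).symm
      exact huS ((hm hmle).1 (Set.mem_insert u m.S))
  exact ⟨m.g, fun s hs => m.past s hs, fun j hj s => m.other j hj s,
    fun s hs => m.cons s (hall s hs)⟩
end

section
/- Let σ_i be a strategy satisfying Frictionality (there exists z_i ∈ A_i such that for every t, every h t-consistent with σ_i for i, and every s > t, {q ∈ [t,s] : h_i(q) ≠ z_i} is finite). Then σ_i satisfies Initial Uniqueness: for any t with T_{>t} ≠ ∅ and any h, g agreeing on T_{<t} and both t-consistent with σ_i for i, there exists s > t such that h_i = g_i on [t,s). -/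
open Set

/-!
Two consistent histories with the same strict past agree at `t`, since the strategy sees only
the past. After `t`, frictionality leaves only finitely many deviations from the default
action `z` in `[t, s₀]`, so some interval `(t, s)` contains none of them, and there both
histories play `z`.
-/

theorem Set.Finite.exists_Ioo_disjoint {α : Type*} [LinearOrder α] {S : Set α}
    (hS : S.Finite) {t s₀ : α} (hts₀ : t < s₀) :
    ∃ s ∈ Ioc t s₀, Disjoint (Ioo t s) S := by
  obtain ⟨s, hs, hmin⟩ := Set.exists_min_image (insert s₀ (S ∩ Ioi t)) id
    ((hS.inter_of_left _).insert s₀) (insert_nonempty _ _)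
  have hts : t < s := by
    rcases hs with rfl | ⟨-, hts⟩
    exacts [hts₀, hts]
  refine ⟨s, ⟨hts, hmin s₀ (mem_insert _ _)⟩, disjoint_left.mpr fun r ⟨htr, hrs⟩ hrS => ?_⟩
  exact (hmin r (mem_insert_of_mem _ ⟨hrS, htr⟩)).not_gt hrs

theorem stmt17 {T : Type*} [ConditionallyCompleteLinearOrderBot T]
    {N : Type*} {A : N → Type*}
    (i : N) (σi : T → (T → ∀ j, A j) → A i) (hpd : PastDep σi)
    (hfr : Frictional i σi) :
    InitUnique i σi := by
  obtain ⟨z, hz⟩ := hfr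
  intro t ⟨s₀, hts₀⟩ h g hpast hhc hgc
  obtain ⟨s, ⟨hts, hss₀⟩, hdisj⟩ :=
    ((hz t h hhc s₀ hts₀).union (hz t g hgc s₀ hts₀)).exists_Ioo_disjoint hts₀
  refine ⟨s, hts, fun r htr hrs => ?_⟩
  rcases htr.eq_or_lt with rfl | htr
  · rw [hhc t le_rfl, hgc t le_rfl]
    exact hpd t h g hpast
  · have hr := disjoint_left.mp hdisj ⟨htr, hrs⟩
    simp only [mem_union, mem_ofPred_eq, not_or, not_and, not_not] at hr
    have hrs₀ : r ≤ s₀ := hrs.le.trans hss₀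
    rw [hr.1 htr.le hrs₀, hr.2 htr.le hrs₀]
end

section
/- Let σ_i be a strategy for player i satisfying Traceability and Initial Uniqueness, t ∈ T with T_{>t} ≠ ∅, and S a connected subset of T_{≥t} containing t. Then for any h, g ∈ H that agree on T_{<t} and satisfy h_i(r) = σ_i(r,h) and g_i(r) = σ_i(r,g) for all r ∈ S, there exists s > t such that h_i = g_i on [t,s) ∩ S. -/
open Set

/-- A ConnIn set is closed under betweenness. -/
lemma connIn_interval {T : Type*} [LinearOrder T] {t : T} {S : Set T}
    (hconn : ConnIn t S) : ∀ a ∈ S, ∀ b ∈ S, ∀ x, a ≤ x → x ≤ b → x ∈ S := by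
  obtain ⟨hsub, hpc⟩ := hconn
  letI : TopologicalSpace (↥(Set.Ici t)) := Preorder.topology _
  haveI : OrderTopology (↥(Set.Ici t)) := ⟨rfl⟩
  have hoc : OrdConnected {x : ↥(Set.Ici t) | x.1 ∈ S} :=
    IsPreconnected.ordConnected hpc
  intro a ha b hb x hax hxb
  have hta : t ≤ a := hsub ha
  have htx : t ≤ x := le_trans hta hax
  exact hoc.out (x := ⟨a, hta⟩) ha (y := ⟨b, hsub hb⟩) hb
    (Set.mem_Icc.mpr ⟨Subtype.coe_le_coe.mp hax, Subtype.coe_le_coe.mp hxb⟩ :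
      (⟨x, htx⟩ : ↥(Set.Ici t)) ∈ Set.Icc ⟨a, hta⟩ ⟨b, hsub hb⟩)

/-- Extension of an `S`-consistent history to a `t`-consistent one. -/
lemma extend_consistent {T : Type*} [LinearOrder T] {N : Type*} {A : N → Type*}
    (i : N) (σi : T → (T → ∀ j, A j) → A i) (hpd : PastDep σi)
    (htr : Traceable i σi) (t u : T) (htu : t ≤ u) (S : Set T)
    (h1 : ∀ x, t ≤ x → x < u → x ∈ S) (h2 : ∀ r ∈ S, r ≤ u)
    (h : T → ∀ j, A j) (hch : ∀ r ∈ S, h r i = σi r h) :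
    ∃ h' : T → ∀ j, A j, (∀ r, r < t → h' r = h r) ∧
      (∀ r, t ≤ r → h' r i = σi r h') ∧ (∀ r ∈ S, h' r i = h r i) := by
  obtain ⟨g', hg1, _, hg3⟩ := htr u h
  have heq : ∀ s, s < u → g' s = h s := hg1
  have key : ∀ r, t ≤ r → r < u → g' r i = σi r g' := by
    intro r htr' hru
    have : g' r = h r := heq r hru
    rw [this, hch r (h1 r htr' hru)]
    exact hpd r h g' (fun s hs => (heq s (lt_trans hs hru)).symm)
  refine ⟨g', fun r hr => heq r (lt_of_lt_of_le hr htu), ?_, ?_⟩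
  · intro r hr
    rcases lt_or_ge r u with hru | hur
    · exact key r hr hru
    · exact hg3 r hur
  · intro r hr
    rcases lt_or_eq_of_le (h2 r hr) with hru | hrq
    · rw [heq r hru]
    · subst hrq
      rw [hg3 r le_rfl]
      rw [show σi r g' = σi r h from hpd r g' h (fun s hs => heq s hs)]
      exact (hch r hr).symm

theorem stmt18 {T : Type*} [ConditionallyCompleteLinearOrderBot T]
    {N : Type*} {A : N → Type*}
    (i : N) (σi : T → (T → ∀ j, A j) → A i) (hpd : PastDep σi)
    (htr : Traceable i σi) (hiu : InitUnique i σi)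
    (t : T) (hts : ∃ s, t < s) (S : Set T) (hconn : ConnIn t S) (htS : t ∈ S)
    (h g : T → ∀ j, A j) (hpast : ∀ r, r < t → h r = g r)
    (hch : ∀ r ∈ S, h r i = σi r h) (hcg : ∀ r ∈ S, g r i = σi r g) :
    ∃ s, t < s ∧ ∀ r, t ≤ r → r < s → r ∈ S → h r i = g r i := by
  have hint := connIn_interval hconn
  by_cases hbdd : BddAbove S
  · set u := sSup S with hu
    have htu : t ≤ u := le_csSup hbdd htS
    have h2 : ∀ r ∈ S, r ≤ u := fun r hr => le_csSup hbdd hr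
    have h1 : ∀ x, t ≤ x → x < u → x ∈ S := by
      intro x htx hxu
      obtain ⟨y, hyS, hxy⟩ := exists_lt_of_lt_csSup ⟨t, htS⟩ hxu
      exact hint t htS y hyS x htx (le_of_lt hxy)
    obtain ⟨h', hh1, hh2, hh3⟩ :=
      extend_consistent i σi hpd htr t u htu S h1 h2 h hch
    obtain ⟨g', hg1, hg2, hg3⟩ :=
      extend_consistent i σi hpd htr t u htu S h1 h2 g hcg
    obtain ⟨s, hs, hag⟩ := hiu t hts h' g'
      (fun r hr => by rw [hh1 r hr, hg1 r hr, hpast r hr]) hh2 hg2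
    exact ⟨s, hs, fun r h1' h2' h3' => by
      rw [← hh3 r h3', ← hg3 r h3']; exact hag r h1' h2'⟩
  · have hall : ∀ r, t ≤ r → r ∈ S := by
      intro r hr
      obtain ⟨y, hyS, hry⟩ := not_bddAbove_iff.mp hbdd r
      exact hint t htS y hyS r hr (le_of_lt hry)
    obtain ⟨s, hs, hag⟩ := hiu t hts h g hpast
      (fun r hr => hch r (hall r hr)) (fun r hr => hcg r (hall r hr))
    exact ⟨s, hs, fun r h1' h2' _ => hag r h1' h2'⟩
end

section
/- Let σ = (σ_i)_{i∈N} be a strategy tuple where each σ_i satisfies Traceability, Well-orderedness, and Initial Uniqueness. Let t ∈ T, h ∈ H, S a connected subset of T_{≥t} containing t, and suppose g, f ∈ H both agree with h on T_{<t} and both satisfy g(r) = σ(r,g) and f(r) = σ(r,f) for all r ∈ S. Then g = f on S. -/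
open Set

theorem stmt19 {T : Type*} [ConditionallyCompleteLinearOrderBot T]
    {N : Type*} [Finite N] [Nonempty N] {A : N → Type*} [∀ j, Nonempty (A j)]
    (σ : ∀ i, T → (T → ∀ j, A j) → A i) (hpd : ∀ i, PastDep (σ i))
    (h1 : ∀ i, Traceable i (σ i)) (h2 : ∀ i, WOStrat i (σ i))
    (h3 : ∀ i, InitUnique i (σ i))
    (t : T) (h : T → ∀ j, A j) (S : Set T) (hconn : ConnIn t S) (htS : t ∈ S)
    (g f : T → ∀ j, A j)
    (hg : ∀ r, r < t → g r = h r) (hf : ∀ r, r < t → f r = h r)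
    (hcg : ∀ r ∈ S, ∀ i, g r i = σ i r g) (hcf : ∀ r ∈ S, ∀ i, f r i = σ i r f) :
    ∀ r ∈ S, g r = f r := by
  have Sdc : ∀ b ∈ S, ∀ x, t ≤ x → x ≤ b → x ∈ S := by
    obtain ⟨hsub, hpc⟩ := hconn
    intro b hb x htx hxb
    letI : TopologicalSpace (↥(Set.Ici t)) := Preorder.topology _
    haveI : OrderTopology (↥(Set.Ici t)) := ⟨rfl⟩
    have hoc : OrdConnected {x : ↥(Set.Ici t) | x.1 ∈ S} := hpc.ordConnected
    have h0 : (⟨t, le_refl t⟩ : ↥(Set.Ici t)) ∈ {x : ↥(Set.Ici t) | x.1 ∈ S} := htS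
    have hb' : (⟨b, hsub hb⟩ : ↥(Set.Ici t)) ∈ {x : ↥(Set.Ici t) | x.1 ∈ S} := hb
    exact hoc.out h0 hb'
      (show (⟨x, htx⟩ : ↥(Set.Ici t)) ∈ Set.Icc ⟨t, le_refl t⟩ ⟨b, hsub hb⟩ from
        ⟨Subtype.mk_le_mk.2 htx, Subtype.mk_le_mk.2 hxb⟩)
  by_contra hcon
  push_neg at hcon
  obtain ⟨r0, hr0S, hr0⟩ := hcon
  set B : Set T := {r | r ∈ S ∧ g r ≠ f r} with hBdef
  have hBne : B.Nonempty := ⟨r0, hr0S, hr0⟩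
  set m := sInf B with hmdef
  have hbdd : BddBelow B := OrderBot.bddBelow B
  have hlb : ∀ b ∈ B, m ≤ b := fun b hb => csInf_le hbdd hb
  have htm : t ≤ m := le_csInf hBne (fun b hb => (hconn.1 hb.1 : t ≤ b))
  obtain ⟨b1, hb1⟩ := hBne
  have hmS : m ∈ S := Sdc b1 hb1.1 m htm (hlb b1 hb1)
  have hpast : ∀ s, s < m → g s = f s := by
    intro s hs
    rcases lt_or_ge s t with h' | h'
    · rw [hg s h', hf s h']
    · have hsS : s ∈ S := Sdc b1 hb1.1 s h' (hs.le.trans (hlb b1 hb1))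
      by_contra hne
      exact absurd (hlb s ⟨hsS, hne⟩) (not_le.2 hs)
  have hgm : g m = f m := by
    funext i
    rw [hcg m hmS i, hcf m hmS i, hpd i m g f hpast]
  have hmB : m ∉ B := fun hmem => hmem.2 hgm
  have hlt : ∀ b ∈ B, m < b := fun b hb =>
    lt_of_le_of_ne (hlb b hb) (fun he => hmB (he ▸ hb))
  have hb0B : b1 ∈ B := hb1
  have hmb0 : m < b1 := hlt b1 hb0B
  have hb0S : b1 ∈ S := hb0B.1
  have key : ∀ i : N, ∃ s, m < s ∧ ∀ r, m ≤ r → r < s → r < b1 → g r i = f r i := by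
    intro i
    obtain ⟨G, hG1, hG2, hG3⟩ := h1 i b1 g
    obtain ⟨F, hF1, hF2, hF3⟩ := h1 i b1 f
    have hGcons : ∀ s, m ≤ s → G s i = σ i s G := by
      intro s hs
      rcases le_or_gt b1 s with h' | h'
      · exact hG3 s h'
      · have hsS : s ∈ S := Sdc b1 hb0S s (htm.trans hs) h'.le
        rw [hG1 s h', hcg s hsS i]
        exact hpd i s g G (fun q hq => (hG1 q (hq.trans h')).symm)
    have hFcons : ∀ s, m ≤ s → F s i = σ i s F := by
      intro s hs
      rcases le_or_gt b1 s with h' | h'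
      · exact hF3 s h'
      · have hsS : s ∈ S := Sdc b1 hb0S s (htm.trans hs) h'.le
        rw [hF1 s h', hcf s hsS i]
        exact hpd i s f F (fun q hq => (hF1 q (hq.trans h')).symm)
    have hGF : ∀ s, s < m → G s = F s := by
      intro s hs
      rw [hG1 s (hs.trans hmb0), hF1 s (hs.trans hmb0), hpast s hs]
    obtain ⟨s, hms, hagree⟩ := h3 i m ⟨b1, hmb0⟩ G F hGF hGcons hFcons
    refine ⟨s, hms, fun r hmr hrs hrb1 => ?_⟩
    have := hagree r hmr hrs
    rwa [hG1 r hrb1, hF1 r hrb1] at this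
  choose s hs1 hs2 using key
  obtain ⟨i0, hi0⟩ := Finite.exists_min s
  have hmc : m < min (s i0) b1 := lt_min (hs1 i0) hmb0
  have hex : ∃ b ∈ B, b < min (s i0) b1 := by
    by_contra hnone
    push_neg at hnone
    exact absurd (le_csInf ⟨b1, hb0B⟩ hnone) (not_le.2 hmc)
  obtain ⟨b', hb'B, hb'c⟩ := hex
  apply hb'B.2
  funext i
  exact hs2 i b' (hlt b' hb'B).le
    (lt_of_lt_of_le hb'c ((min_le_left _ _).trans (hi0 i)))
    (lt_of_lt_of_le hb'c (min_le_right _ _))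
end
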